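/- arXiv:1504.00769 — 2 statements merged into one kernel-verified Lean document; each statement's English description precedes it below -/
import Mathlib

section
/- The union over all integers r ≥ 2 of the sets Π_∞^(r) of r-graph Turán densities is dense in [0,1]; that is, the topological closure of ∪_{r≥2} Π_∞^(r) equals [0,1]. -/
open Filter Topology

/-- An `r`-graph: a finite vertex set (identified with `Fin n`) together with a set of
edges, each of which is an `r`-element subset of the vertex set. -/
structure RGraph (r : ℕ) where
  n : ℕ
  edges : Finset (Finset (Fin n))
  card_eq : ∀ e ∈ edges, e.card = r

/-- `F` is a subgraph of `G`: there is an injection of the vertices of `F` into the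
vertices of `G` carrying every edge of `F` to an edge of `G`. -/
def RGraph.IsSubgraph {r : ℕ} (F G : RGraph r) : Prop :=
  ∃ f : Fin F.n → Fin G.n, Function.Injective f ∧ ∀ e ∈ F.edges, e.image f ∈ G.edges

/-- `G` is `𝓕`-free: no member of `𝓕` is a subgraph of `G`. -/
def RGraph.Free {r : ℕ} (𝓕 : Set (RGraph r)) (G : RGraph r) : Prop :=
  ∀ F ∈ 𝓕, ¬ F.IsSubgraph G

/-- The Turán function `ex(n, 𝓕)`: the maximum number of edges in an `𝓕`-free
`r`-graph on `n` vertices. -/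
noncomputable def exNum (r : ℕ) (𝓕 : Set (RGraph r)) (n : ℕ) : ℕ :=
  sSup {k : ℕ | ∃ G : RGraph r, G.n = n ∧ RGraph.Free 𝓕 G ∧ G.edges.card = k}

/-- `Π_∞^(r)`: the set of Turán densities `π(𝓕) = lim_{n→∞} ex(n,𝓕)/C(n,r)` over all
(possibly infinite, possibly empty) families `𝓕` of `r`-graphs. -/
def turanDensities (r : ℕ) : Set ℝ :=
  {x : ℝ | ∃ 𝓕 : Set (RGraph r),
    Tendsto (fun n : ℕ => (exNum r 𝓕 n : ℝ) / (n.choose r : ℝ)) atTop (𝓝 x)}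

/-!
Let `𝓕` be the family of `r`-graphs admitting no `k`-colouring that is injective on every edge.
An `𝓕`-free graph lies inside the complete `k`-partite `r`-graph on its colour classes, whose
edges are counted by the elementary symmetric polynomial `e_r` of the class sizes; smoothing the
class sizes shows that `e_r` is largest, up to rounding, for equal classes. Hence
`π(𝓕) = k(k-1)⋯(k-r+1)/k^r = ∏_{i<r} (1 - i/k)`. For `k = m²` these values decrease in `r` from
`1` to `0` in steps of at most `2/m` (because `∏_{i<r} (1 - i/k) ≤ 2k/(2k + r(r-1))`), so they are
`2/m`-dense in `[0,1]`, which contains every Turán density.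
-/

open Finset

namespace Finset

variable {ι R : Type*} [CommSemiring R]

def esymm (s : Finset ι) (r : ℕ) (x : ι → R) : R :=
  ∑ t ∈ s.powersetCard r, ∏ i ∈ t, x i

theorem esymm_congr {s : Finset ι} (r : ℕ) {x y : ι → R} (h : ∀ i ∈ s, x i = y i) :
    s.esymm r x = s.esymm r y :=
  sum_congr rfl fun _ ht => prod_congr rfl fun i hi => h i ((mem_powersetCard.1 ht).1 hi)

theorem esymm_le_of_forall_le {s : Finset ι} {x : ι → ℕ} {b : ℕ} (h : ∀ i ∈ s, x i ≤ b)
    (r : ℕ) : s.esymm r x ≤ s.card.choose r * b ^ r := by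
  calc s.esymm r x ≤ ∑ _t ∈ s.powersetCard r, b ^ r :=
        sum_le_sum fun t ht => (mem_powersetCard.1 ht).2 ▸
          prod_le_pow_card t x b fun i hi => h i ((mem_powersetCard.1 ht).1 hi)
    _ = s.card.choose r * b ^ r := by rw [sum_const, card_powersetCard, smul_eq_mul]

theorem le_esymm_of_forall_le {s : Finset ι} {x : ι → ℕ} {b : ℕ} (h : ∀ i ∈ s, b ≤ x i)
    (r : ℕ) : s.card.choose r * b ^ r ≤ s.esymm r x := by
  calc s.card.choose r * b ^ r = ∑ _t ∈ s.powersetCard r, b ^ r := by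
        rw [sum_const, card_powersetCard, smul_eq_mul]
    _ ≤ s.esymm r x :=
        sum_le_sum fun t ht => (mem_powersetCard.1 ht).2 ▸
          pow_card_le_prod t x b fun i hi => h i ((mem_powersetCard.1 ht).1 hi)

variable [DecidableEq ι]

theorem sum_eq_add_add_sum_erase_erase {M : Type*} [AddCommMonoid M] {s : Finset ι} {i j : ι}
    (hi : i ∈ s) (hj : j ∈ s) (hij : i ≠ j) (f : ι → M) :
    ∑ l ∈ s, f l = f i + f j + ∑ l ∈ (s.erase i).erase j, f l := by
  rw [add_assoc, add_sum_erase _ _ (mem_erase.2 ⟨hij.symm, hj⟩), add_sum_erase _ _ hi]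

theorem esymm_insert {a : ι} {s : Finset ι} (ha : a ∉ s) (r : ℕ) (x : ι → R) :
    (insert a s).esymm (r + 1) x = s.esymm (r + 1) x + x a * s.esymm r x := by
  have hnot : ∀ t ∈ s.powersetCard r, a ∉ t := fun t ht hat => ha ((mem_powersetCard.1 ht).1 hat)
  rw [esymm, powersetCard_succ_insert ha, sum_union, sum_image, esymm, esymm, mul_sum]
  · exact congrArg _ (sum_congr rfl fun t ht => prod_insert (hnot t ht))
  · intro t ht u hu htu
    rw [← erase_insert (hnot t ht), ← erase_insert (hnot u hu)]
    exact congrArg (erase · a) htu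
  · refine disjoint_left.2 fun t ht ht' => ?_
    obtain ⟨u, -, rfl⟩ := mem_image.1 ht'
    exact ha ((mem_powersetCard.1 ht).1 (mem_insert_self a u))

theorem esymm_add_two_eq_erase_erase {s : Finset ι} {i j : ι} (hi : i ∈ s) (hj : j ∈ s)
    (hij : i ≠ j) (m : ℕ) (x : ι → R) :
    s.esymm (m + 2) x = ((s.erase i).erase j).esymm (m + 2) x
      + (x i + x j) * ((s.erase i).erase j).esymm (m + 1) x
      + x i * x j * ((s.erase i).erase j).esymm m x := by
  have hs : s = insert i (insert j ((s.erase i).erase j)) := by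
    rw [insert_erase (mem_erase.2 ⟨hij.symm, hj⟩), insert_erase hi]
  have hit : i ∉ insert j ((s.erase i).erase j) := by simp [hij]
  conv_lhs => rw [hs, esymm_insert hit, esymm_insert (notMem_erase _ _),
    esymm_insert (notMem_erase _ _)]
  ring

theorem esymm_le_esymm_of_transfer {s : Finset ι} {i j : ι} (hi : i ∈ s) (hj : j ∈ s)
    (hij : i ≠ j) {x y : ι → ℕ} (hxy : ∀ l ∈ (s.erase i).erase j, x l = y l)
    (hsum : x i + x j = y i + y j) (hprod : x i * x j ≤ y i * y j) (m : ℕ) :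
    s.esymm (m + 2) x ≤ s.esymm (m + 2) y := by
  rw [esymm_add_two_eq_erase_erase hi hj hij, esymm_add_two_eq_erase_erase hi hj hij, hsum,
    esymm_congr _ hxy, esymm_congr _ hxy, esymm_congr _ hxy]
  gcongr

end Finset

theorem exists_balancing_step {ι : Type*} [Fintype ι] [DecidableEq ι] {x : ι → ℕ} {i j : ι}
    (hij : i ≠ j) (hgap : x j + 2 ≤ x i) :
    ∃ y : ι → ℕ, ∑ l, y l = ∑ l, x l ∧ ∑ l, y l ^ 2 < ∑ l, x l ^ 2 ∧
      ∀ m, univ.esymm (m + 2) x ≤ univ.esymm (m + 2) y := by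
  obtain ⟨a, ha⟩ : ∃ a, x i = a + 1 := ⟨x i - 1, by omega⟩
  set y := Function.update (Function.update x i a) j (x j + 1) with hy
  have hyi : y i = a := by simp [hy, hij]
  have hyj : y j = x j + 1 := by simp [hy]
  have hxy : ∀ l ∈ (univ.erase i).erase j, x l = y l := fun l hl => by
    simp only [mem_erase] at hl
    simp [hy, hl.1, hl.2.1]
  have hsplit := fun f : ι → ℕ => sum_eq_add_add_sum_erase_erase (mem_univ i) (mem_univ j) hij f
  refine ⟨y, ?_, ?_, fun m => esymm_le_esymm_of_transfer (mem_univ i) (mem_univ j) hij hxy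
    (by omega) (by rw [hyi, hyj, ha]; nlinarith) m⟩
  · have hys : ∑ l, y l = y i + y j + ∑ l ∈ (univ.erase i).erase j, x l := by
      rw [hsplit y, sum_congr rfl fun l hl => (hxy l hl).symm]
    have hxs : ∑ l, x l = x i + x j + ∑ l ∈ (univ.erase i).erase j, x l := hsplit x
    omega
  · have hys : ∑ l, y l ^ 2 = y i ^ 2 + y j ^ 2 + ∑ l ∈ (univ.erase i).erase j, x l ^ 2 := by
      rw [hsplit (y · ^ 2), sum_congr rfl fun l hl => congrArg (· ^ 2) (hxy l hl).symm]
    have hxs : ∑ l, x l ^ 2 = x i ^ 2 + x j ^ 2 + ∑ l ∈ (univ.erase i).erase j, x l ^ 2 :=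
      hsplit (x · ^ 2)
    rw [hyi, hyj] at hys
    rw [ha] at hxs hgap
    nlinarith

theorem Fin.exists_le_div_of_sum_eq {k n : ℕ} (hk : 0 < k) {x : Fin k → ℕ}
    (hx : ∑ i, x i = n) : ∃ j, x j ≤ n / k := by
  by_contra! h
  have : k * (n / k + 1) ≤ n := by
    simpa [← hx] using sum_le_sum fun j (_ : j ∈ univ) => Nat.succ_le_of_lt (h j)
  nlinarith [Nat.lt_mul_div_succ n hk]

/-- Balancing steps strictly decrease the sum of squares, so they end at a vector bounded by
`n / k + 1`. -/
theorem Fin.esymm_le_of_sum_eq {k n : ℕ} (hk : 0 < k) (m : ℕ) (x : Fin k → ℕ)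
    (hx : ∑ i, x i = n) : univ.esymm (m + 2) x ≤ k.choose (m + 2) * (n / k + 1) ^ (m + 2) := by
  induction h : ∑ i, x i ^ 2 using Nat.strong_induction_on generalizing x with
  | _ N ih =>
  by_cases hb : ∀ i ∈ univ, x i ≤ n / k + 1
  · simpa using esymm_le_of_forall_le hb (m + 2)
  push Not at hb
  obtain ⟨i, -, hi⟩ := hb
  obtain ⟨j, hj⟩ := exists_le_div_of_sum_eq hk hx
  obtain ⟨y, hsum, hsq, hle⟩ :=
    exists_balancing_step (x := x) (i := i) (j := j) (by rintro rfl; omega) (by omega)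
  exact (hle m).trans (ih _ (h ▸ hsq) y (hsum.trans hx) rfl)

section Rainbow

variable {α ι : Type*} [Fintype α] [DecidableEq ι]

open Classical in
def transversals (c : α → ι) (I : Finset ι) : Finset (Finset α) :=
  {e | Set.InjOn c e ∧ e.image c = I}

theorem card_transversals [DecidableEq α] (c : α → ι) (I : Finset ι) :
    #(transversals c I) = ∏ i ∈ I, #{v | c v = i} := by
  rw [← card_pi]
  symm
  have hc : ∀ f ∈ I.pi fun i => ({v | c v = i} : Finset α), ∀ i (hi : i ∈ I), c (f i hi) = i :=
    fun f hf i hi => (mem_filter.1 (mem_pi.1 hf i hi)).2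
  refine card_bij (fun f _ => I.attach.image fun i => f i.1 i.2) (fun f hf => ?_)
    (fun f hf g hg hfg => ?_) (fun e he => ?_)
  · simp only [transversals, mem_filter, mem_univ, true_and]
    refine ⟨?_, ?_⟩
    · simp only [coe_image, Set.InjOn, Set.mem_image, mem_coe, mem_attach, true_and]
      rintro _ ⟨i, rfl⟩ _ ⟨j, rfl⟩ h
      rw [hc f hf, hc f hf] at h
      rw [Subtype.ext h]
    · ext i
      simp only [mem_image, mem_attach, true_and, Subtype.exists]
      exact ⟨fun ⟨_, ⟨j, hj, rfl⟩, h⟩ => h ▸ (hc f hf j hj).symm ▸ hj,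
        fun hi => ⟨f i hi, ⟨i, hi, rfl⟩, hc f hf i hi⟩⟩
  · funext i hi
    obtain ⟨⟨j, hj⟩, -, hji⟩ := mem_image.1 (hfg ▸ mem_image_of_mem _ (mem_attach I ⟨i, hi⟩))
    obtain rfl : j = i := by simpa [hc g hg, hc f hf] using congrArg c hji
    exact hji.symm
  · simp only [transversals, mem_filter, mem_univ, true_and] at he
    obtain ⟨hinj, himage⟩ := he
    have hex : ∀ i ∈ I, ∃ v ∈ e, c v = i := fun i hi => mem_image.1 (himage ▸ hi)
    choose f hfe hfc using hex
    refine ⟨f, mem_pi.2 fun i hi => mem_filter.2 ⟨mem_univ _, hfc i hi⟩, ?_⟩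
    ext v
    simp only [mem_image, mem_attach, true_and, Subtype.exists]
    refine ⟨fun ⟨i, hi, hv⟩ => hv ▸ hfe i hi, fun hv => ?_⟩
    have hcv : c v ∈ I := himage ▸ mem_image_of_mem c hv
    exact ⟨c v, hcv, hinj (hfe _ hcv) hv (hfc _ hcv)⟩

open Classical in
def rainbowSets (c : α → ι) (r : ℕ) : Finset (Finset α) :=
  {e ∈ univ.powersetCard r | Set.InjOn c e}

theorem mem_rainbowSets {c : α → ι} {r : ℕ} {e : Finset α} :
    e ∈ rainbowSets c r ↔ #e = r ∧ Set.InjOn c e := by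
  simp [rainbowSets]

theorem card_rainbowSets [DecidableEq α] [Fintype ι] (c : α → ι) (r : ℕ) :
    #(rainbowSets c r) = univ.esymm r fun i => #{v | c v = i} := by
  have hunion : rainbowSets c r = (univ.powersetCard r).biUnion (transversals c) := by
    ext e
    simp only [rainbowSets, transversals, mem_filter, mem_biUnion, mem_powersetCard,
      subset_univ, mem_univ, true_and]
    constructor
    · rintro ⟨he, hinj⟩
      exact ⟨e.image c, by rw [card_image_of_injOn hinj, he], hinj, rfl⟩
    · rintro ⟨I, hI, hinj, rfl⟩
      exact ⟨by rw [← hI, card_image_of_injOn hinj], hinj⟩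
  have hdisj : ((univ.powersetCard r : Finset (Finset ι)) : Set (Finset ι)).PairwiseDisjoint
      (transversals c) := by
    intro I _ J _ hIJ
    refine disjoint_left.2 fun e heI heJ => hIJ ?_
    simp only [transversals, mem_filter] at heI heJ
    rw [← heI.2.2, heJ.2.2]
  rw [hunion, card_biUnion hdisj, esymm]
  exact sum_congr rfl fun I _ => card_transversals c I

end Rainbow

theorem Fin.div_le_card_filter_val_mod_eq {k : ℕ} (n : ℕ) {i : ℕ} (hi : i < k) :
    n / k ≤ #{v : Fin n | (v : ℕ) % k = i} := by
  have hlt : ∀ a : Fin (n / k), a * k + i < n := fun a => by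
    have := Nat.div_mul_le_self n k
    have := Nat.mul_le_mul_right k a.isLt
    rw [Nat.succ_mul] at this
    omega
  calc n / k = #(univ : Finset (Fin (n / k))) := by simp
    _ ≤ _ := card_le_card_of_injOn (fun a => ⟨a * k + i, hlt a⟩)
        (fun a _ => by simp [Nat.add_mod, Nat.mod_eq_of_lt hi])
        (fun a _ b _ h => Fin.ext <| by simpa [(Nat.zero_lt_of_lt hi).ne'] using h)

namespace RGraph

variable {r : ℕ}

def RainbowColorable (k : ℕ) (G : RGraph r) : Prop :=
  ∃ c : Fin G.n → Fin k, ∀ e ∈ G.edges, Set.InjOn c e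

theorem RainbowColorable.of_isSubgraph {k : ℕ} {F G : RGraph r} (h : F.IsSubgraph G)
    (hG : G.RainbowColorable k) : F.RainbowColorable k := by
  obtain ⟨f, hf, hfe⟩ := h
  obtain ⟨c, hc⟩ := hG
  exact ⟨c ∘ f, fun e he a ha b hb hab =>
    hf (hc _ (hfe e he) (mem_image_of_mem f ha) (mem_image_of_mem f hb) hab)⟩

theorem free_iff_rainbowColorable {k : ℕ} (G : RGraph r) :
    G.Free {F | ¬ F.RainbowColorable k} ↔ G.RainbowColorable k :=
  ⟨fun h => not_not.1 fun hG => h G hG ⟨id, Function.injective_id, fun e he => by rwa [image_id]⟩,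
    fun hG _ hF hFG => hF (hG.of_isSubgraph hFG)⟩

theorem card_edges_le_choose (G : RGraph r) : #G.edges ≤ G.n.choose r := by
  simpa using card_le_card fun e he => mem_powersetCard.2 ⟨subset_univ e, G.card_eq e he⟩

theorem card_edges_le_card_rainbowSets {k : ℕ} (G : RGraph r) {c : Fin G.n → Fin k}
    (hc : ∀ e ∈ G.edges, Set.InjOn c e) : #G.edges ≤ #(rainbowSets c r) :=
  card_le_card fun e he => mem_rainbowSets.2 ⟨G.card_eq e he, hc e he⟩

def completePartite {n k : ℕ} (c : Fin n → Fin k) (r : ℕ) : RGraph r where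
  n := n
  edges := rainbowSets c r
  card_eq _ he := (mem_rainbowSets.1 he).1

theorem completePartite_rainbowColorable {n k : ℕ} (c : Fin n → Fin k) :
    (completePartite c r).RainbowColorable k :=
  ⟨c, fun _ he => (mem_rainbowSets.1 he).2⟩

end RGraph

section ExNum

variable {r n : ℕ} {𝓕 : Set (RGraph r)}

theorem le_exNum {G : RGraph r} (hn : G.n = n) (hG : G.Free 𝓕) : #G.edges ≤ exNum r 𝓕 n :=
  le_csSup ⟨n.choose r, by rintro _ ⟨H, rfl, -, rfl⟩; exact H.card_edges_le_choose⟩ ⟨G, hn, hG, rfl⟩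

theorem exNum_le {b : ℕ} (h : ∀ G : RGraph r, G.n = n → G.Free 𝓕 → #G.edges ≤ b) :
    exNum r 𝓕 n ≤ b :=
  csSup_le' <| by rintro _ ⟨G, hn, hG, rfl⟩; exact h G hn hG

theorem exNum_le_choose : exNum r 𝓕 n ≤ n.choose r :=
  exNum_le fun G hn _ => hn ▸ G.card_edges_le_choose

variable {k : ℕ}

theorem exNum_not_rainbowColorable_le (hk : 0 < k) (hr : 2 ≤ r) (n : ℕ) :
    exNum r {F | ¬ F.RainbowColorable k} n ≤ k.choose r * (n / k + 1) ^ r := by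
  refine exNum_le fun G hn hG => ?_
  obtain ⟨c, hc⟩ := (G.free_iff_rainbowColorable).1 hG
  obtain ⟨m, rfl⟩ : ∃ m, r = m + 2 := ⟨r - 2, by omega⟩
  have hsum : ∑ i, #{v | c v = i} = n := by
    rw [← hn, ← card_eq_sum_card_fiberwise fun v _ => mem_univ (c v), card_univ,
      Fintype.card_fin]
  calc #G.edges ≤ #(rainbowSets c (m + 2)) := G.card_edges_le_card_rainbowSets hc
    _ = univ.esymm (m + 2) fun i => #{v | c v = i} := card_rainbowSets c (m + 2)
    _ ≤ k.choose (m + 2) * (n / k + 1) ^ (m + 2) := Fin.esymm_le_of_sum_eq hk m _ hsum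

theorem le_exNum_not_rainbowColorable (hk : 0 < k) (r n : ℕ) :
    k.choose r * (n / k) ^ r ≤ exNum r {F | ¬ F.RainbowColorable k} n := by
  let c : Fin n → Fin k := fun v => ⟨v % k, Nat.mod_lt _ hk⟩
  have hfiber : ∀ i ∈ univ, n / k ≤ #{v | c v = i} := fun i _ => by
    simpa [c, Fin.ext_iff] using Fin.div_le_card_filter_val_mod_eq n i.isLt
  calc k.choose r * (n / k) ^ r ≤ univ.esymm r fun i => #{v | c v = i} := by
        simpa using le_esymm_of_forall_le hfiber r
    _ = #(RGraph.completePartite c r).edges := (card_rainbowSets c r).symm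
    _ ≤ _ := le_exNum rfl <| (RGraph.free_iff_rainbowColorable _).2 <|
        RGraph.completePartite_rainbowColorable c

end ExNum

open Asymptotics

noncomputable def partiteDensity (k r : ℕ) : ℝ := k.descFactorial r / k ^ r

theorem tendsto_choose_mul_div_add_pow_div_choose {k : ℕ} (hk : 0 < k) (r : ℕ) (c : ℝ) :
    Tendsto (fun n : ℕ => k.choose r * ((n : ℝ) / k + c) ^ r / n.choose r) atTop
      (𝓝 (partiteDensity k r)) := by
  have hk' : (0 : ℝ) < k := Nat.cast_pos.2 hk
  have hlin : (fun n : ℕ => (n : ℝ) / k + c) ~[atTop] fun n => (n : ℝ) / k :=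
    IsEquivalent.refl.add_const_of_norm_tendsto_atTop <|
      tendsto_norm_atTop_atTop.comp (tendsto_natCast_atTop_atTop.atTop_div_const hk')
  have hequiv := ((IsEquivalent.refl (u := fun _ : ℕ => (k.choose r : ℝ))).mul
    (hlin.pow r)).div (isEquivalent_choose r)
  refine hequiv.symm.tendsto_nhds (tendsto_const_nhds.congr' ?_)
  filter_upwards [eventually_ne_atTop 0] with n hn
  simp only [Pi.mul_apply, Pi.div_apply, Pi.pow_apply, partiteDensity,
    Nat.descFactorial_eq_factorial_mul_choose, div_pow]
  push_cast
  field_simp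

theorem tendsto_exNum_not_rainbowColorable {k r : ℕ} (hk : 0 < k) (hr : 2 ≤ r) :
    Tendsto (fun n : ℕ => (exNum r {F | ¬ F.RainbowColorable k} n : ℝ) / n.choose r) atTop
      (𝓝 (partiteDensity k r)) := by
  have hk' : (0 : ℝ) < k := Nat.cast_pos.2 hk
  refine tendsto_of_tendsto_of_tendsto_of_le_of_le'
    (tendsto_choose_mul_div_add_pow_div_choose hk r (-1))
    (tendsto_choose_mul_div_add_pow_div_choose hk r 1) ?_ (Eventually.of_forall fun n => ?_)
  · filter_upwards [eventually_ge_atTop k] with n hn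
    have hfloor : (n : ℝ) / k - 1 ≤ (n / k : ℕ) :=
      (Nat.floor_div_eq_div (K := ℝ) n k ▸ Nat.sub_one_lt_floor _).le
    have hnk : 0 ≤ (n : ℝ) / k - 1 := by
      rw [sub_nonneg, one_le_div hk']
      exact_mod_cast hn
    gcongr
    calc (k.choose r : ℝ) * ((n : ℝ) / k + -1) ^ r ≤ k.choose r * ((n / k : ℕ) : ℝ) ^ r := by
          rw [← sub_eq_add_neg]; gcongr
      _ ≤ _ := by exact_mod_cast le_exNum_not_rainbowColorable hk r n
  · gcongr
    calc (exNum r {F | ¬ F.RainbowColorable k} n : ℝ)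
        ≤ k.choose r * ((n / k : ℕ) + 1 : ℝ) ^ r := by
          exact_mod_cast exNum_not_rainbowColorable_le hk hr n
      _ ≤ _ := by gcongr; exact Nat.cast_div_le

theorem partiteDensity_nonneg (k r : ℕ) : 0 ≤ partiteDensity k r := by
  unfold partiteDensity
  positivity

theorem partiteDensity_one {k : ℕ} (hk : 0 < k) : partiteDensity k 1 = 1 := by
  simp [partiteDensity, hk.ne']

theorem partiteDensity_eq_zero_of_lt {k r : ℕ} (h : k < r) : partiteDensity k r = 0 := by
  simp [partiteDensity, Nat.descFactorial_eq_zero_iff_lt.2 h]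

theorem partiteDensity_succ (k r : ℕ) :
    partiteDensity k (r + 1) = partiteDensity k r * ((k - r : ℕ) / k) := by
  simp only [partiteDensity, Nat.descFactorial_succ, pow_succ, Nat.cast_mul]
  ring

theorem partiteDensity_sub_succ_le {k : ℕ} (hk : 0 < k) (r : ℕ) :
    partiteDensity k r - partiteDensity k (r + 1) ≤ partiteDensity k r * r / k := by
  have hk' : (0 : ℝ) < k := Nat.cast_pos.2 hk
  have hsub : (k : ℝ) ≤ (k - r : ℕ) + r := by exact_mod_cast (by omega : k ≤ k - r + r)
  have hgap : partiteDensity k r * r / k - (partiteDensity k r - partiteDensity k (r + 1)) =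
      partiteDensity k r * (((k - r : ℕ) + r - k) / k) := by
    rw [partiteDensity_succ]
    field_simp
    ring
  rw [← sub_nonneg, hgap]
  exact mul_nonneg (partiteDensity_nonneg k r) (div_nonneg (by linarith) hk'.le)

/-- The Weierstrass-type bound `∏ (1 - i / k) ≤ 1 / (1 + ∑ i / k)`, with `∑_{i < r} i = r(r-1)/2`
cleared of denominators. -/
theorem partiteDensity_mul_le {k : ℕ} (hk : 0 < k) (r : ℕ) :
    partiteDensity k r * (2 * k + r * (r - 1)) ≤ 2 * k := by
  have hk' : (0 : ℝ) < k := Nat.cast_pos.2 hk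
  induction r with
  | zero => simp [partiteDensity]
  | succ r ih =>
    rw [partiteDensity_succ]
    rcases le_or_gt k r with hkr | hrk
    · simp [Nat.sub_eq_zero_of_le hkr]
    have hcast : ((k - r : ℕ) : ℝ) = k - r := Nat.cast_sub hrk.le
    rw [hcast]
    push_cast
    have key : ((k : ℝ) - r) * (2 * k + (r + 1) * r) ≤ k * (2 * k + r * (r - 1)) := by
      nlinarith [sq_nonneg (r : ℝ), Nat.cast_nonneg (α := ℝ) r]
    calc partiteDensity k r * ((k - r) / k) * (2 * k + (r + 1) * (r + 1 - 1))
        = partiteDensity k r * (((k : ℝ) - r) * (2 * k + (r + 1) * r)) / k := by ring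
      _ ≤ partiteDensity k r * (k * (2 * k + r * (r - 1))) / k := by
        gcongr
        exact partiteDensity_nonneg k r
      _ = partiteDensity k r * (2 * k + r * (r - 1)) := by field_simp
      _ ≤ 2 * k := ih

theorem partiteDensity_sub_succ_le_two_div {m : ℕ} (hm : 0 < m) (r : ℕ) :
    partiteDensity (m ^ 2) r - partiteDensity (m ^ 2) (r + 1) ≤ 2 / m := by
  have hm' : (1 : ℝ) ≤ m := Nat.one_le_cast.2 hm
  have hr : (0 : ℝ) ≤ r := Nat.cast_nonneg r
  have hgap := partiteDensity_sub_succ_le (pow_pos hm 2) r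
  have hbound := partiteDensity_mul_le (pow_pos hm 2) r
  push_cast at hgap hbound
  rw [le_div_iff₀ (by positivity)] at hgap
  set g := partiteDensity (m ^ 2) r - partiteDensity (m ^ 2) (r + 1)
  set S : ℝ := 2 * m ^ 2 + r * (r - 1)
  have hS : 0 < S := by nlinarith [sq_nonneg ((r : ℝ) - 1 / 2)]
  -- `g ≤ d r / m² ≤ 2r / S` and `r m ≤ S`, hence `g m ≤ 2`.
  have h1 : g * S ≤ 2 * r := by
    refine le_of_mul_le_mul_right ?_ (by positivity : (0 : ℝ) < m ^ 2)
    nlinarith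
  have h2 : r * m ≤ S := by nlinarith [sq_nonneg ((r : ℝ) - m)]
  rw [le_div_iff₀ (by positivity)]
  nlinarith

theorem exists_abs_sub_le_of_sub_succ_le {a : ℕ → ℝ} {δ x : ℝ} {N : ℕ}
    (hstep : ∀ j, a j - a (j + 1) ≤ δ) (h0 : x ≤ a 0 + δ) (hN : a N ≤ x) :
    ∃ j, |a j - x| ≤ δ := by
  classical
  have hex : ∃ j, a j ≤ x := ⟨N, hN⟩
  have hle := Nat.find_spec hex
  rcases hfind : Nat.find hex with _ | i
  · rw [hfind] at hle
    exact ⟨0, abs_le.2 ⟨by linarith, by linarith⟩⟩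
  · have hlt : x < a i := not_le.1 (Nat.find_min hex (hfind ▸ i.lt_succ_self))
    rw [hfind] at hle
    exact ⟨i + 1, abs_le.2 ⟨by linarith [hstep i], by linarith [hstep i]⟩⟩

theorem exists_partiteDensity_abs_sub_lt {x ε : ℝ} (hx : x ∈ Set.Icc (0 : ℝ) 1) (hε : 0 < ε) :
    ∃ k r : ℕ, 0 < k ∧ 2 ≤ r ∧ |partiteDensity k r - x| < ε := by
  obtain ⟨m, hm⟩ := exists_nat_gt (2 / ε)
  have hm0 : 0 < m := Nat.cast_pos.1 ((div_pos two_pos hε).trans hm)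
  have hδ : 2 / (m : ℝ) < ε := by
    rw [div_lt_iff₀ (by positivity)]
    rwa [div_lt_iff₀ hε, mul_comm] at hm
  have h0 : x ≤ partiteDensity (m ^ 2) 2 + 2 / m := by
    have := partiteDensity_sub_succ_le_two_div hm0 1
    rw [partiteDensity_one (pow_pos hm0 2)] at this
    linarith [hx.2]
  have hN : partiteDensity (m ^ 2) (m ^ 2 + 2) ≤ x := by
    rw [partiteDensity_eq_zero_of_lt (by omega)]
    exact hx.1
  obtain ⟨j, hj⟩ := exists_abs_sub_le_of_sub_succ_le (a := fun j => partiteDensity (m ^ 2) (j + 2))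
    (fun j => partiteDensity_sub_succ_le_two_div hm0 (j + 2)) h0 hN
  exact ⟨m ^ 2, j + 2, pow_pos hm0 2, le_add_self, hj.trans_lt hδ⟩


theorem turanDensities_subset_Icc (r : ℕ) : turanDensities r ⊆ Set.Icc 0 1 := by
  rintro x ⟨𝓕, hx⟩
  exact ⟨ge_of_tendsto' hx fun n => by positivity,
    le_of_tendsto' hx fun n => div_le_one_of_le₀ (mod_cast exNum_le_choose) (by positivity)⟩

theorem partiteDensity_mem_turanDensities {k r : ℕ} (hk : 0 < k) (hr : 2 ≤ r) :
    partiteDensity k r ∈ turanDensities r :=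
  ⟨_, tendsto_exNum_not_rainbowColorable hk hr⟩

/-- The union over all `r ≥ 2` of the sets of `r`-graph Turán densities is dense in
`[0,1]`: its topological closure equals `[0,1]`. -/
theorem stmt3 :
    closure (⋃ r ∈ {r : ℕ | 2 ≤ r}, turanDensities r) = Set.Icc (0 : ℝ) 1 := by
  refine subset_antisymm
    (closure_minimal (Set.iUnion₂_subset fun r _ => turanDensities_subset_Icc r) isClosed_Icc)
    fun x hx => Metric.mem_closure_iff.2 fun ε hε => ?_
  obtain ⟨k, r, hk, hr, hkr⟩ := exists_partiteDensity_abs_sub_lt hx hε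
  exact ⟨_, Set.mem_biUnion hr (partiteDensity_mem_turanDensities hk hr),
    by rwa [dist_comm, Real.dist_eq]⟩
end

section
/- Let r ≥ 2 and m ≥ r be integers, let G be an r-graph on [m], and let G' = G ∪ {e} be obtained from G by adding one new edge e. If Λ_{G'} − Λ_G = r!/r^r, then Λ_G = 0 (i.e., G has no edges), and moreover any point x of the standard simplex maximizing λ_{G'} satisfies x_u = 1/r for every u ∈ e. -/
/-- The Lagrange polynomial `λ_G(x) = r! · Σ_{e ∈ G} Π_{i ∈ e} x_i` of an `r`-graph `G`
on the vertex set `[m]`. -/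
noncomputable def lagrangePoly (r m : ℕ) (G : Finset (Finset (Fin m))) (x : Fin m → ℝ) : ℝ :=
  (r.factorial : ℝ) * ∑ e ∈ G, ∏ i ∈ e, x i

/-- The Lagrangian `Λ_G`: the maximum of `λ_G` over the standard simplex. -/
noncomputable def lagrangian (r m : ℕ) (G : Finset (Finset (Fin m))) : ℝ :=
  sSup (lagrangePoly r m G '' stdSimplex ℝ (Fin m))

/-!
Let `x` maximize `λ_{G ∪ {e}}` on the simplex. Then `Λ_{G ∪ {e}} = r! ∏_{u ∈ e} x_u + λ_G(x)`,
where the first term is at most `r!/r^r` by AM-GM and the second at most `Λ_G`. A gap of exactly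
`r!/r^r` forces equality in both: `x` is constant `1/r` on `e` (equality case of AM-GM), so it
vanishes off `e`, and since every edge of `G` meets the complement of `e`, `Λ_G = λ_G(x) = 0`.
An edge `f ∈ G` would give `Λ_G ≥ r!/r^r` via the uniform weight on `f`, hence `G = ∅`.
-/

open Finset

namespace Finset
variable {ι : Type*} {s : Finset ι} {x : ι → ℝ}

lemma prod_eq_prod_rpow_inv_card_pow (hx : ∀ i ∈ s, 0 ≤ x i) (hs : s.Nonempty) :
    ∏ i ∈ s, x i = (∏ i ∈ s, x i ^ (#s : ℝ)⁻¹) ^ #s := by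
  have hcard : (#s : ℝ) ≠ 0 := by exact_mod_cast hs.card_pos.ne'
  rw [← prod_pow]
  refine prod_congr rfl fun i hi => ?_
  rw [← Real.rpow_natCast, ← Real.rpow_mul (hx i hi), inv_mul_cancel₀ hcard, Real.rpow_one]

lemma sum_inv_card_eq_one (hs : s.Nonempty) : ∑ _i ∈ s, (#s : ℝ)⁻¹ = 1 := by
  rw [sum_const, nsmul_eq_mul, mul_inv_cancel₀ (by exact_mod_cast hs.card_pos.ne')]

lemma prod_le_sum_div_card_pow (hx : ∀ i ∈ s, 0 ≤ x i) :
    ∏ i ∈ s, x i ≤ ((∑ i ∈ s, x i) / #s) ^ #s := by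
  rcases s.eq_empty_or_nonempty with rfl | hs
  · simp
  rw [prod_eq_prod_rpow_inv_card_pow hx hs, div_eq_inv_mul, mul_sum]
  have hgm := Real.geom_mean_le_arith_mean_weighted s _ x (fun _ _ => by positivity)
    (sum_inv_card_eq_one hs) hx
  exact pow_le_pow_left₀ (prod_nonneg fun i hi => Real.rpow_nonneg (hx i hi) _) hgm _

lemma eq_sum_div_card_of_prod_eq (hx : ∀ i ∈ s, 0 ≤ x i)
    (h : ∏ i ∈ s, x i = ((∑ i ∈ s, x i) / #s) ^ #s) :
    ∀ j ∈ s, x j = (∑ i ∈ s, x i) / #s := by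
  rcases s.eq_empty_or_nonempty with rfl | hs
  · simp
  rw [prod_eq_prod_rpow_inv_card_pow hx hs, div_eq_inv_mul, mul_sum] at h
  rw [div_eq_inv_mul, mul_sum]
  refine (Real.geom_mean_eq_arith_mean_weighted_iff_of_pos' s _ x (fun _ _ => by positivity)
    (sum_inv_card_eq_one hs) hx).mp ?_
  exact (pow_left_inj₀ (prod_nonneg fun i hi => Real.rpow_nonneg (hx i hi) _)
    (sum_nonneg fun i hi => mul_nonneg (by positivity) (hx i hi)) hs.card_pos.ne').mp h

lemma prod_le_inv_card_pow_of_sum_le_one (hx : ∀ i ∈ s, 0 ≤ x i) (h1 : ∑ i ∈ s, x i ≤ 1) :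
    ∏ i ∈ s, x i ≤ ((#s : ℝ)⁻¹) ^ #s := by
  refine (prod_le_sum_div_card_pow hx).trans (pow_le_pow_left₀ ?_ ?_ _)
  · exact div_nonneg (sum_nonneg hx) (Nat.cast_nonneg _)
  · rw [div_eq_inv_mul]
    exact mul_le_of_le_one_right (by positivity) h1

lemma eq_inv_card_of_prod_eq_inv_card_pow (hx : ∀ i ∈ s, 0 ≤ x i) (h1 : ∑ i ∈ s, x i ≤ 1)
    (h : ∏ i ∈ s, x i = ((#s : ℝ)⁻¹) ^ #s) :
    ∀ j ∈ s, x j = (#s : ℝ)⁻¹ := by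
  rcases s.eq_empty_or_nonempty with rfl | hs
  · simp
  have hmean : (∑ i ∈ s, x i) / #s = (#s : ℝ)⁻¹ := by
    refine le_antisymm ?_ ?_
    · rw [div_eq_inv_mul]
      exact mul_le_of_le_one_right (by positivity) h1
    · refine le_of_pow_le_pow_left₀ hs.card_pos.ne' ?_ ?_
      · exact div_nonneg (sum_nonneg hx) (Nat.cast_nonneg _)
      · exact h ▸ prod_le_sum_div_card_pow hx
  rw [← hmean]
  exact eq_sum_div_card_of_prod_eq hx (h.trans (congrArg (· ^ #s) hmean.symm))

end Finset

lemma eq_zero_of_mem_stdSimplex_of_sum_eq_one {ι : Type*} [Fintype ι] [DecidableEq ι]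
    {x : ι → ℝ} (hx : x ∈ stdSimplex ℝ ι) {s : Finset ι} (h : ∑ i ∈ s, x i = 1) {j : ι}
    (hj : j ∉ s) : x j = 0 := by
  have hrest : ∑ i ∈ univ \ s, x i = 0 := by
    rw [sum_sdiff_eq_sub (subset_univ s), hx.2, h, sub_self]
  exact (sum_eq_zero_iff_of_nonneg fun i _ => hx.1 i).mp hrest j (by simp [hj])

section Lagrangian
variable {r m : ℕ} {G : Finset (Finset (Fin m))} {x : Fin m → ℝ}

lemma continuous_lagrangePoly : Continuous (lagrangePoly r m G) :=
  continuous_const.mul <| continuous_finsetSum _ fun _ _ =>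
    continuous_finsetProd _ fun i _ => continuous_apply i

lemma lagrangePoly_le_lagrangian (hx : x ∈ stdSimplex ℝ (Fin m)) :
    lagrangePoly r m G x ≤ lagrangian r m G :=
  le_csSup ((isCompact_stdSimplex ℝ (Fin m)).image continuous_lagrangePoly).bddAbove
    (Set.mem_image_of_mem _ hx)

lemma exists_lagrangePoly_eq_lagrangian [Nonempty (Fin m)] :
    ∃ x ∈ stdSimplex ℝ (Fin m), lagrangePoly r m G x = lagrangian r m G :=
  ((isCompact_stdSimplex ℝ (Fin m)).image continuous_lagrangePoly).sSup_mem
    (Set.image_nonempty.mpr ⟨_, single_mem_stdSimplex ℝ (Classical.arbitrary _)⟩)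

lemma lagrangePoly_insert {e : Finset (Fin m)} (heG : e ∉ G) :
    lagrangePoly r m (insert e G) x = r.factorial * ∏ i ∈ e, x i + lagrangePoly r m G x := by
  simp only [lagrangePoly, sum_insert heG, mul_add]

lemma lagrangePoly_eq_zero_of_eq_zero_off {e : Finset (Fin m)} (hG : ∀ f ∈ G, #f = #e)
    (heG : e ∉ G) (hx : ∀ j ∉ e, x j = 0) : lagrangePoly r m G x = 0 := by
  rw [lagrangePoly, sum_eq_zero fun f hf => ?_, mul_zero]
  have hfe : ¬ f ⊆ e := fun hsub => heG (eq_of_subset_of_card_le hsub (hG f hf).ge ▸ hf)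
  obtain ⟨i, hif, hie⟩ := not_subset.mp hfe
  exact prod_eq_zero hif (hx i hie)

lemma factorial_div_pow_le_lagrangian {f : Finset (Fin m)} (hf : f ∈ G) (hfr : #f = r)
    (hr : 0 < r) : (r.factorial : ℝ) / r ^ r ≤ lagrangian r m G := by
  classical
  set y : Fin m → ℝ := fun i => if i ∈ f then (r : ℝ)⁻¹ else 0
  have hy0 : ∀ i, 0 ≤ y i := fun i => by dsimp [y]; split <;> positivity
  have hyS : y ∈ stdSimplex ℝ (Fin m) := by
    refine ⟨hy0, ?_⟩
    rw [sum_ite_mem, univ_inter, sum_const, hfr, nsmul_eq_mul,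
      mul_inv_cancel₀ (by exact_mod_cast hr.ne')]
  have hyf : ∏ i ∈ f, y i = ((r : ℝ)⁻¹) ^ r := by
    rw [prod_congr rfl fun i hi => if_pos hi, prod_const, hfr]
  calc (r.factorial : ℝ) / r ^ r = r.factorial * ∏ i ∈ f, y i := by
        rw [hyf, inv_pow, div_eq_mul_inv]
    _ ≤ lagrangePoly r m G y := by
        refine mul_le_mul_of_nonneg_left ?_ (Nat.cast_nonneg _)
        exact single_le_sum (f := fun f' => ∏ i ∈ f', y i)
          (fun f' _ => prod_nonneg fun i _ => hy0 i) hf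
    _ ≤ lagrangian r m G := lagrangePoly_le_lagrangian hyS

lemma eq_inv_and_lagrangePoly_eq_of_lagrangian_insert_sub {e : Finset (Fin m)} (he : #e = r)
    (heG : e ∉ G)
    (heq : lagrangian r m (insert e G) - lagrangian r m G = r.factorial / (r : ℝ) ^ r)
    (hx : x ∈ stdSimplex ℝ (Fin m))
    (hmax : lagrangePoly r m (insert e G) x = lagrangian r m (insert e G)) :
    (∀ u ∈ e, x u = (r : ℝ)⁻¹) ∧ lagrangePoly r m G x = lagrangian r m G := by
  have hx0 : ∀ i ∈ e, 0 ≤ x i := fun i _ => hx.1 i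
  have hsum : ∑ i ∈ e, x i ≤ 1 :=
    hx.2 ▸ sum_le_sum_of_subset_of_nonneg (subset_univ e) fun i _ _ => hx.1 i
  have hprod : ∏ i ∈ e, x i ≤ ((r : ℝ)⁻¹) ^ r := he ▸ prod_le_inv_card_pow_of_sum_le_one hx0 hsum
  have hfac : (0 : ℝ) < r.factorial := by positivity
  have hGx := lagrangePoly_le_lagrangian (r := r) (G := G) hx
  rw [lagrangePoly_insert heG] at hmax
  have hprod_eq : ∏ i ∈ e, x i = ((r : ℝ)⁻¹) ^ r := by
    refine le_antisymm hprod (le_of_mul_le_mul_left ?_ hfac)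
    rw [inv_pow, ← div_eq_mul_inv]
    linarith [mul_le_mul_of_nonneg_left hprod hfac.le]
  refine ⟨he ▸ eq_inv_card_of_prod_eq_inv_card_pow hx0 hsum (he ▸ hprod_eq), ?_⟩
  rw [hprod_eq, inv_pow, ← div_eq_mul_inv] at hmax
  linarith

end Lagrangian

theorem stmt5_general (r m : ℕ) (hr : 2 ≤ r)
    (G : Finset (Finset (Fin m))) (hG : ∀ f ∈ G, f.card = r)
    (e : Finset (Fin m)) (he : e.card = r) (heG : e ∉ G)
    (heq : lagrangian r m (insert e G) - lagrangian r m G = (r.factorial : ℝ) / (r : ℝ) ^ r) :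
    lagrangian r m G = 0 ∧ G = ∅ ∧
      ∀ x ∈ stdSimplex ℝ (Fin m),
        lagrangePoly r m (insert e G) x = lagrangian r m (insert e G) →
        ∀ u ∈ e, x u = 1 / (r : ℝ) := by
  have hr0 : 0 < r := by omega
  obtain ⟨u, -⟩ : e.Nonempty := card_pos.mp (he ▸ hr0)
  have : Nonempty (Fin m) := ⟨u⟩
  obtain ⟨x, hx, hxmax⟩ := exists_lagrangePoly_eq_lagrangian (r := r) (G := insert e G)
  obtain ⟨hxe, hxG⟩ := eq_inv_and_lagrangePoly_eq_of_lagrangian_insert_sub he heG heq hx hxmax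
  have hxe_sum : ∑ i ∈ e, x i = 1 := by
    rw [sum_congr rfl hxe, sum_const, he, nsmul_eq_mul, mul_inv_cancel₀ (by positivity)]
  have hL : lagrangian r m G = 0 := hxG ▸ lagrangePoly_eq_zero_of_eq_zero_off
    (fun f hf => (hG f hf).trans he.symm) heG
    fun j hj => eq_zero_of_mem_stdSimplex_of_sum_eq_one hx hxe_sum hj
  refine ⟨hL, ?_, fun y hy hymax => ?_⟩
  · by_contra hne
    obtain ⟨f, hf⟩ := nonempty_iff_ne_empty.mpr hne
    have hlow := factorial_div_pow_le_lagrangian hf (hG f hf) hr0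
    have : (0 : ℝ) < r.factorial / (r : ℝ) ^ r := by positivity
    linarith
  · simpa only [one_div] using
      (eq_inv_and_lagrangePoly_eq_of_lagrangian_insert_sub he heG heq hy hymax).1

/-- If adding a single edge `e` to an `r`-graph `G` increases the Lagrangian by exactly
`r!/r^r`, then `Λ_G = 0` (i.e. `G` has no edges), and every point of the standard simplex
maximizing `λ_{G ∪ {e}}` has all coordinates on `e` equal to `1/r`. -/
theorem stmt5 (r m : ℕ) (hr : 2 ≤ r) (hm : r ≤ m)
    (G : Finset (Finset (Fin m))) (hG : ∀ f ∈ G, f.card = r)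
    (e : Finset (Fin m)) (he : e.card = r) (heG : e ∉ G)
    (heq : lagrangian r m (insert e G) - lagrangian r m G = (r.factorial : ℝ) / (r : ℝ) ^ r) :
    lagrangian r m G = 0 ∧ G = ∅ ∧
      ∀ x ∈ stdSimplex ℝ (Fin m),
        lagrangePoly r m (insert e G) x = lagrangian r m (insert e G) →
        ∀ u ∈ e, x u = 1 / (r : ℝ) :=
  stmt5_general r m hr G hG e he heG heq
end
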